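/- arXiv:2002.03174 — 2 statements merged into one kernel-verified Lean document; each statement's English description precedes it below -/
import Mathlib

section
/- Let n agents have single-peaked value densities on [0,1] with a common slope k, pairwise distinct peaks, supports whose union is [0,1], and normalized total value 1 each. Then every allocation that is non-wasteful, connected, and peak-preserving is Pareto optimal. -/
open MeasureTheory

noncomputable def pieceVal (v : ℝ → ℝ) (P : Set ℝ) : ℝ := ∫ x in P, v x

def IsAlloc {n : ℕ} (X : Fin n → Set ℝ) : Prop :=
  (∀ i, MeasurableSet (X i)) ∧ (∀ i j, i ≠ j → X i ∩ X j = ∅) ∧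
    (⋃ i, X i) = Set.Icc (0:ℝ) 1

def Dominates {n : ℕ} (v : Fin n → ℝ → ℝ) (Y X : Fin n → Set ℝ) : Prop :=
  (∀ i, pieceVal (v i) (X i) ≤ pieceVal (v i) (Y i)) ∧
    ∃ i, pieceVal (v i) (X i) < pieceVal (v i) (Y i)

def ParetoOpt {n : ℕ} (v : Fin n → ℝ → ℝ) (X : Fin n → Set ℝ) : Prop :=
  ¬ ∃ Y, IsAlloc Y ∧ Dominates v Y X

def Supp01 (v : ℝ → ℝ) : Set ℝ := {x ∈ Set.Icc (0:ℝ) 1 | 0 < v x}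

def SinglePeakedD (v : ℝ → ℝ) (p k : ℝ) : Prop :=
  0 < k ∧ p ∈ Set.Icc (0:ℝ) 1 ∧
    (∀ x ∈ Set.Icc (0:ℝ) 1, v x = max 0 (v p - k * |x - p|)) ∧
    (∫ x in Set.Icc (0:ℝ) 1, v x) = 1

def NonWasteful {n : ℕ} (v : Fin n → ℝ → ℝ) (X : Fin n → Set ℝ) : Prop :=
  ∀ i, volume (X i \ Supp01 (v i)) = 0

def ConnPeakPres {n : ℕ} (p : Fin n → ℝ) (X : Fin n → Set ℝ) : Prop :=
  ∃ (c : Fin (n+1) → ℝ) (σ : Equiv.Perm (Fin n)),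
    Monotone c ∧ c 0 = 0 ∧ c (Fin.last n) = 1 ∧
    StrictMono (fun i => p (σ i)) ∧
    ∀ i : Fin n, X (σ i) =ᵐ[volume] Set.Ioc (c i.castSucc) (c i.succ)

def EnvyFreeA {n : ℕ} (v : Fin n → ℝ → ℝ) (X : Fin n → Set ℝ) : Prop :=
  ∀ i j, pieceVal (v i) (X j) ≤ pieceVal (v i) (X i)

/-!
With a common slope and a common total value, peaks `p₁ < p₂` have heights differing by at most
`k (p₂ - p₁)`; from this the tents have monotone likelihood ratios (`v₂ / v₁` is nondecreasing).
If at every cut both neighbouring agents value the cut point positively, this lets one choose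
positive weights `w` such that on every piece its owner's weighted density is the largest; the
connected peak-ordered allocation then maximises `∑ w i * V i`, so an allocation that weakly
improves everybody gives everybody exactly the same value. If instead an agent's density vanishes
at an end of its (nonempty) piece, the tent shape and the likelihood ratios make every agent on
that side worthless beyond that cut, and the problem splits into two smaller ones, settled one
after the other by induction.
-/

open Set Function Filter

lemma ae_le_of_setIntegral_le {α : Type*} [MeasurableSpace α] {μ : Measure α} {M : α → ℝ}
    {S U : Set α} (hM : Integrable M μ) (hM0 : 0 ≤ᵐ[μ] M)
    (hpos : ∀ᵐ x ∂μ, x ∈ S → 0 < M x) (hS : MeasurableSet S) (hU : MeasurableSet U)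
    (hUS : U ⊆ S) (h : ∫ x in S, M x ∂μ ≤ ∫ x in U, M x ∂μ) : S ≤ᵐ[μ] U := by
  have hdiff : ∫ x in S \ U, M x ∂μ = 0 := by
    rw [setIntegral_sdiff hU hM.integrableOn hUS]
    exact le_antisymm (sub_nonpos.2 h)
      (sub_nonneg.2 (setIntegral_mono_set hM.integrableOn (ae_restrict_of_ae hM0)
        (Eventually.of_forall hUS)))
  have hzero := (setIntegral_eq_zero_iff_of_nonneg_ae (ae_restrict_of_ae hM0)
    hM.integrableOn).1 hdiff
  rw [EventuallyEq, ae_restrict_iff' (hS.diff hU)] at hzero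
  filter_upwards [hzero, hpos] with x hx0 hxpos hxS
  by_contra hxU
  exact (hxpos hxS).ne' (hx0 ⟨hxS, hxU⟩)

lemma tent_pos_left {k p₁ p₂ x y h₁ h₂ : ℝ} (hk : 0 < k) (hp : p₁ < p₂) (hxy : x ≤ y)
    (H : h₂ - h₁ ≤ k * (p₂ - p₁)) (hy : 0 < h₁ - k * |y - p₁|) (hx : 0 < h₂ - k * |x - p₂|) :
    0 < h₁ - k * |x - p₁| := by
  rcases abs_cases (x - p₁) with ⟨e₁, f₁⟩ | ⟨e₁, f₁⟩ <;>
  rcases abs_cases (y - p₁) with ⟨e₂, f₂⟩ | ⟨e₂, f₂⟩ <;>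
  rcases abs_cases (x - p₂) with ⟨e₃, f₃⟩ | ⟨e₃, f₃⟩ <;>
  simp only [e₁, e₂, e₃] at * <;> nlinarith

lemma tent_pos_right {k p₁ p₂ x y h₁ h₂ : ℝ} (hk : 0 < k) (hp : p₁ < p₂) (hxy : x ≤ y)
    (H : h₁ - h₂ ≤ k * (p₂ - p₁)) (hy : 0 < h₁ - k * |y - p₁|) (hx : 0 < h₂ - k * |x - p₂|) :
    0 < h₂ - k * |y - p₂| := by
  rcases abs_cases (y - p₂) with ⟨e₁, f₁⟩ | ⟨e₁, f₁⟩ <;>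
  rcases abs_cases (y - p₁) with ⟨e₂, f₂⟩ | ⟨e₂, f₂⟩ <;>
  rcases abs_cases (x - p₂) with ⟨e₃, f₃⟩ | ⟨e₃, f₃⟩ <;>
  simp only [e₁, e₂, e₃] at * <;> nlinarith

lemma tent_mul_le {k p₁ p₂ x y h₁ h₂ : ℝ} (hk : 0 < k) (hp : p₁ < p₂) (hxy : x ≤ y)
    (H₁ : h₁ - h₂ ≤ k * (p₂ - p₁)) (H₂ : h₂ - h₁ ≤ k * (p₂ - p₁))
    (hy : 0 < h₁ - k * |y - p₁|) (hx : 0 < h₂ - k * |x - p₂|) (hx' : 0 < h₁ - k * |x - p₁|) :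
    (h₁ - k * |y - p₁|) * (h₂ - k * |x - p₂|) ≤ (h₁ - k * |x - p₁|) * (h₂ - k * |y - p₂|) := by
  rcases abs_cases (x - p₁) with ⟨e₁, f₁⟩ | ⟨e₁, f₁⟩ <;>
  rcases abs_cases (y - p₁) with ⟨e₂, f₂⟩ | ⟨e₂, f₂⟩ <;>
  rcases abs_cases (x - p₂) with ⟨e₃, f₃⟩ | ⟨e₃, f₃⟩ <;>
  rcases abs_cases (y - p₂) with ⟨e₄, f₄⟩ | ⟨e₄, f₄⟩ <;>
  simp only [e₁, e₂, e₃, e₄] at * <;>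
  nlinarith [mul_pos hk hy, mul_pos hk hx, mul_pos hk hx', mul_nonneg hk.le (sub_nonneg.2 hxy)]

namespace SinglePeakedD

variable {v v₁ v₂ : ℝ → ℝ} {p p₁ p₂ k x y z lo hi : ℝ}

lemma nonneg (h : SinglePeakedD v p k) (hx : x ∈ Icc (0:ℝ) 1) : 0 ≤ v x := by
  rw [h.2.2.1 x hx]
  exact le_max_left _ _

lemma pos_iff (h : SinglePeakedD v p k) (hx : x ∈ Icc (0:ℝ) 1) :
    0 < v x ↔ 0 < v p - k * |x - p| := by
  rw [h.2.2.1 x hx, lt_max_iff, lt_self_iff_false, false_or]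

lemma eq_zero_iff (h : SinglePeakedD v p k) (hx : x ∈ Icc (0:ℝ) 1) :
    v x = 0 ↔ v p - k * |x - p| ≤ 0 := by
  rw [h.2.2.1 x hx, max_eq_left_iff]

lemma continuousOn (h : SinglePeakedD v p k) : ContinuousOn v (Icc 0 1) :=
  (by fun_prop : Continuous fun x => max 0 (v p - k * |x - p|)).continuousOn.congr h.2.2.1

lemma integrableOn (h : SinglePeakedD v p k) : IntegrableOn v (Icc 0 1) :=
  h.continuousOn.integrableOn_compact isCompact_Icc

lemma peak_pos (h : SinglePeakedD v p k) : 0 < v p := by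
  by_contra! hp
  have hzero : ∀ x ∈ Icc (0:ℝ) 1, v x = 0 := fun x hx =>
    (h.eq_zero_iff hx).2 (by nlinarith [abs_nonneg (x - p), h.1])
  have := h.2.2.2
  rw [setIntegral_congr_fun measurableSet_Icc hzero] at this
  simp at this

/-- Otherwise one tent lies strictly above the other, contradicting equal total values. -/
lemma peak_sub_le (h₁ : SinglePeakedD v₁ p₁ k) (h₂ : SinglePeakedD v₂ p₂ k) :
    v₁ p₁ - v₂ p₂ ≤ k * |p₁ - p₂| := by
  by_contra! H
  have htent : ∀ x, v₂ p₂ - k * |x - p₂| < v₁ p₁ - k * |x - p₁| := fun x => by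
    nlinarith [abs_sub_le x p₂ p₁, abs_sub_comm p₂ p₁, h₁.1]
  have hint := intervalIntegral.integral_lt_integral_of_continuousOn_of_le_of_exists_lt
    zero_lt_one h₂.continuousOn h₁.continuousOn
    (fun x hx => by
      rw [h₁.2.2.1 x (Ioc_subset_Icc_self hx), h₂.2.2.1 x (Ioc_subset_Icc_self hx)]
      exact max_le_max le_rfl (htent x).le)
    ⟨p₂, h₂.2.1, by
      have := htent p₂
      rw [sub_self, abs_zero, mul_zero, sub_zero] at this
      rw [h₁.2.2.1 p₂ h₂.2.1]
      exact this.trans_le (le_max_right _ _)⟩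
  simp only [intervalIntegral.integral_of_le zero_le_one, ← integral_Icc_eq_integral_Ioc,
    h₁.2.2.2, h₂.2.2.2, lt_irrefl] at hint

/-- Monotone likelihood ratio: `v₂ / v₁` is nondecreasing. -/
lemma mul_le_mul_of_peak_lt (h₁ : SinglePeakedD v₁ p₁ k) (h₂ : SinglePeakedD v₂ p₂ k)
    (hp : p₁ < p₂) (hx : x ∈ Icc (0:ℝ) 1) (hy : y ∈ Icc (0:ℝ) 1) (hxy : x ≤ y) :
    v₁ y * v₂ x ≤ v₁ x * v₂ y := by
  have H₁ := h₁.peak_sub_le h₂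
  have H₂ := h₂.peak_sub_le h₁
  rw [abs_of_neg (sub_neg.2 hp), neg_sub] at H₁
  rw [abs_of_pos (sub_pos.2 hp)] at H₂
  rcases (h₁.nonneg hy).eq_or_lt with h1y | h1y
  · rw [← h1y, zero_mul]
    exact mul_nonneg (h₁.nonneg hx) (h₂.nonneg hy)
  rcases (h₂.nonneg hx).eq_or_lt with h2x | h2x
  · rw [← h2x, mul_zero]
    exact mul_nonneg (h₁.nonneg hx) (h₂.nonneg hy)
  rw [h₁.pos_iff hy] at h1y
  rw [h₂.pos_iff hx] at h2x
  have h1x := tent_pos_left h₁.1 hp hxy H₂ h1y h2x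
  have h2y := tent_pos_right h₁.1 hp hxy H₁ h1y h2x
  rw [h₁.2.2.1 x hx, h₁.2.2.1 y hy, h₂.2.2.1 x hx, h₂.2.2.1 y hy, max_eq_right h1x.le,
    max_eq_right h1y.le, max_eq_right h2x.le, max_eq_right h2y.le]
  exact tent_mul_le h₁.1 hp hxy H₁ H₂ h1y h2x h1x

lemma eq_zero_right_of_pos (h : SinglePeakedD v p k) (hx : x ∈ Icc (0:ℝ) 1)
    (hy : y ∈ Icc (0:ℝ) 1) (hz : z ∈ Icc (0:ℝ) 1) (hxy : x < y) (hyz : y ≤ z)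
    (hvx : 0 < v x) (hvy : v y = 0) : v z = 0 := by
  rw [h.pos_iff hx] at hvx
  rw [h.eq_zero_iff hy] at hvy
  rw [h.eq_zero_iff hz]
  have hk := h.1
  rcases abs_cases (x - p) with ⟨e₁, f₁⟩ | ⟨e₁, f₁⟩ <;>
  rcases abs_cases (y - p) with ⟨e₂, f₂⟩ | ⟨e₂, f₂⟩ <;>
  rcases abs_cases (z - p) with ⟨e₃, f₃⟩ | ⟨e₃, f₃⟩ <;>
  simp only [e₁, e₂, e₃] at * <;> nlinarith

lemma eq_zero_left_of_pos (h : SinglePeakedD v p k) (hx : x ∈ Icc (0:ℝ) 1)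
    (hy : y ∈ Icc (0:ℝ) 1) (hz : z ∈ Icc (0:ℝ) 1) (hyx : y < x) (hzy : z ≤ y)
    (hvx : 0 < v x) (hvy : v y = 0) : v z = 0 := by
  rw [h.pos_iff hx] at hvx
  rw [h.eq_zero_iff hy] at hvy
  rw [h.eq_zero_iff hz]
  have hk := h.1
  rcases abs_cases (x - p) with ⟨e₁, f₁⟩ | ⟨e₁, f₁⟩ <;>
  rcases abs_cases (y - p) with ⟨e₂, f₂⟩ | ⟨e₂, f₂⟩ <;>
  rcases abs_cases (z - p) with ⟨e₃, f₃⟩ | ⟨e₃, f₃⟩ <;>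
  simp only [e₁, e₂, e₃] at * <;> nlinarith

/-- A zero inside the piece would make `v` vanish on the whole side of it away from the peak,
a set of positive measure. -/
lemma pos_of_mem_Ioo (h : SinglePeakedD v p k) (hlo : lo ∈ Icc (0:ℝ) 1)
    (hhi : hi ∈ Icc (0:ℝ) 1) (hnull : volume (Ioc lo hi \ Supp01 v) = 0)
    (hx : x ∈ Ioo lo hi) : 0 < v x := by
  have hxI : x ∈ Icc (0:ℝ) 1 := ⟨hlo.1.trans hx.1.le, hx.2.le.trans hhi.2⟩
  by_contra! hvx
  replace hvx : v x = 0 := le_antisymm hvx (h.nonneg hxI)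
  have hpx : p ≠ x := by rintro rfl; exact h.peak_pos.ne' hvx
  obtain ⟨a, b, hab, hsub⟩ : ∃ a b, a < b ∧ Ioo a b ⊆ Ioc lo hi \ Supp01 v := by
    rcases hpx.lt_or_gt with hpx | hxp
    · refine ⟨x, hi, hx.2, fun t ht => ⟨⟨hx.1.trans ht.1, ht.2.le⟩, fun ht' => ?_⟩⟩
      have htI : t ∈ Icc (0:ℝ) 1 := ⟨hxI.1.trans ht.1.le, ht.2.le.trans hhi.2⟩
      exact ht'.2.ne' (h.eq_zero_right_of_pos h.2.1 hxI htI hpx ht.1.le h.peak_pos hvx)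
    · refine ⟨lo, x, hx.1, fun t ht => ⟨⟨ht.1, ht.2.le.trans hx.2.le⟩, fun ht' => ?_⟩⟩
      have htI : t ∈ Icc (0:ℝ) 1 := ⟨hlo.1.trans ht.1.le, ht.2.le.trans hxI.2⟩
      exact ht'.2.ne' (h.eq_zero_left_of_pos h.2.1 hxI htI hxp ht.2.le h.peak_pos hvx)
  have := measure_mono_null hsub hnull
  rw [Real.volume_Ioo, ENNReal.ofReal_eq_zero] at this
  linarith

end SinglePeakedD

/-- Agents are indexed by `ℕ`; agent `j` holds the piece `(e j, e (j + 1)]`. -/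
structure MLRPProfile (e : ℕ → ℝ) (f : ℕ → ℝ → ℝ) : Prop where
  monotone : Monotone e
  mem_Icc : ∀ j, e j ∈ Icc (0:ℝ) 1
  nonneg : ∀ j, ∀ x ∈ Icc (0:ℝ) 1, 0 ≤ f j x
  integrableOn : ∀ j, IntegrableOn (f j) (Icc 0 1)
  pos : ∀ j, ∀ x ∈ Ioo (e j) (e (j + 1)), 0 < f j x
  mul_le_mul : ∀ {j j'}, j < j' → ∀ x ∈ Icc (0:ℝ) 1, ∀ y ∈ Icc (0:ℝ) 1, x ≤ y →
    f j y * f j' x ≤ f j x * f j' y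
  eq_zero_right : ∀ j, ∀ x ∈ Icc (0:ℝ) 1, ∀ y ∈ Icc (0:ℝ) 1, ∀ z ∈ Icc (0:ℝ) 1,
    x < y → y ≤ z → 0 < f j x → f j y = 0 → f j z = 0
  eq_zero_left : ∀ j, ∀ x ∈ Icc (0:ℝ) 1, ∀ y ∈ Icc (0:ℝ) 1, ∀ z ∈ Icc (0:ℝ) 1,
    y < x → z ≤ y → 0 < f j x → f j y = 0 → f j z = 0

structure IsWeakImprovement (e : ℕ → ℝ) (f : ℕ → ℝ → ℝ) (Z : ℕ → Set ℝ) : Prop where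
  measurableSet : ∀ j, MeasurableSet (Z j)
  subset_Icc : ∀ j, Z j ⊆ Icc (0:ℝ) 1
  pairwise_disjoint : Pairwise (Disjoint on Z)
  eq_empty : ∀ j, e (j + 1) ≤ e j → Z j = ∅
  le_integral : ∀ j, ∫ x in Ioc (e j) (e (j + 1)), f j x ≤ ∫ x in Z j, f j x

def Confined (e : ℕ → ℝ) (f : ℕ → ℝ → ℝ) (Z : ℕ → Set ℝ) (a b : ℕ) : Prop :=
  ∀ j ∈ Finset.Ico a b, ∀ᵐ x, x ∈ Z j → f j x ≠ 0 → x ∈ Ioc (e a) (e b)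

def Tight (e : ℕ → ℝ) (f : ℕ → ℝ → ℝ) (Z : ℕ → Set ℝ) (a b : ℕ) : Prop :=
  (∀ j ∈ Finset.Ico a b, ∫ x in Z j, f j x = ∫ x in Ioc (e j) (e (j + 1)), f j x) ∧
    Ioc (e a) (e b) ≤ᵐ[volume] ⋃ j ∈ Finset.Ico a b, Z j

def LeftVanishing (e : ℕ → ℝ) (f : ℕ → ℝ → ℝ) (s : ℕ) : Prop :=
  ∀ j < s, ∀ y ∈ Icc (0:ℝ) 1, e s ≤ y → f j y = 0

def RightVanishing (e : ℕ → ℝ) (f : ℕ → ℝ → ℝ) (s : ℕ) : Prop :=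
  ∀ j, s ≤ j → ∀ y ∈ Icc (0:ℝ) 1, y ≤ e s → f j y = 0

def IsEnvelopeWeight (e : ℕ → ℝ) (f : ℕ → ℝ → ℝ) (a b : ℕ) (w : ℕ → ℝ) : Prop :=
  (∀ j, 0 ≤ w j) ∧ (∀ j ∈ Finset.Ico a b, e j < e (j + 1) → 0 < w j) ∧
    ∀ l ∈ Finset.Ico a b, ∀ x ∈ Ioc (e l) (e (l + 1)), ∀ j ∈ Finset.Ico a b,
      w j * f j x ≤ w l * f l x

/-- `t` is the last agent in `[a, b)` with a nonempty piece; if there is none, all weights vanish. -/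
def IsRightFrontier (e : ℕ → ℝ) (f : ℕ → ℝ → ℝ) (a b : ℕ) (w : ℕ → ℝ) : Prop :=
  (∀ j ∈ Finset.Ico a b, w j = 0) ∨ ∃ t ∈ Finset.Ico a b, e t < e (t + 1) ∧ e (t + 1) = e b ∧
    ∀ x ∈ Icc (e b) 1, ∀ j ∈ Finset.Ico a b, w j * f j x ≤ w t * f t x

/-- The weighted density of the owner of each point; under `IsEnvelopeWeight` it is the upper
envelope of all the weighted densities. -/
noncomputable def envelope (e : ℕ → ℝ) (f : ℕ → ℝ → ℝ) (w : ℕ → ℝ) (I : Finset ℕ) (x : ℝ) :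
    ℝ :=
  ∑ l ∈ I, (Ioc (e l) (e (l + 1))).indicator (fun y => w l * f l y) x

section Profile

variable {e : ℕ → ℝ} {f : ℕ → ℝ → ℝ} {Z : ℕ → Set ℝ} {a b s : ℕ}

namespace Confined

variable (hZ : IsWeakImprovement e f Z) (hconf : Confined e f Z a b)
include hZ hconf

lemma left_of_leftVanishing (hs : LeftVanishing e f s) (hsb : s ≤ b) : Confined e f Z a s := by
  intro j hj
  rw [Finset.mem_Ico] at hj
  filter_upwards [hconf j (Finset.mem_Ico.2 ⟨hj.1, hj.2.trans_le hsb⟩)] with x hx hxZ hfx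
  exact ⟨(hx hxZ hfx).1, not_lt.1 fun hlt => hfx (hs j hj.2 x (hZ.subset_Icc j hxZ) hlt.le)⟩

lemma right_of_rightVanishing (hs : RightVanishing e f s) (has : a ≤ s) :
    Confined e f Z s b := by
  intro j hj
  rw [Finset.mem_Ico] at hj
  filter_upwards [hconf j (Finset.mem_Ico.2 ⟨has.trans hj.1, hj.2⟩)] with x hx hxZ hfx
  exact ⟨not_le.1 fun hle => hfx (hs j hj.1 x (hZ.subset_Icc j hxZ) hle), (hx hxZ hfx).2⟩

lemma right_of_ae_le (hcov : Ioc (e a) (e s) ≤ᵐ[volume] ⋃ j ∈ Finset.Ico a s, Z j)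
    (has : a ≤ s) : Confined e f Z s b := by
  intro j hj
  rw [Finset.mem_Ico] at hj
  filter_upwards [hconf j (Finset.mem_Ico.2 ⟨has.trans hj.1, hj.2⟩), hcov]
    with x hx hxcov hxZ hfx
  refine ⟨not_le.1 fun hle => ?_, (hx hxZ hfx).2⟩
  obtain ⟨l, hl, hxl⟩ := mem_iUnion₂.1 (hxcov ⟨(hx hxZ hfx).1, hle⟩)
  exact disjoint_left.1 (hZ.pairwise_disjoint (by rw [Finset.mem_Ico] at hl; omega)) hxl hxZ

lemma left_of_ae_le (hcov : Ioc (e s) (e b) ≤ᵐ[volume] ⋃ j ∈ Finset.Ico s b, Z j)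
    (hsb : s ≤ b) : Confined e f Z a s := by
  intro j hj
  rw [Finset.mem_Ico] at hj
  filter_upwards [hconf j (Finset.mem_Ico.2 ⟨hj.1, hj.2.trans_le hsb⟩), hcov]
    with x hx hxcov hxZ hfx
  refine ⟨(hx hxZ hfx).1, not_lt.1 fun hlt => ?_⟩
  obtain ⟨l, hl, hxl⟩ := mem_iUnion₂.1 (hxcov ⟨hlt, (hx hxZ hfx).2⟩)
  exact disjoint_left.1 (hZ.pairwise_disjoint (by rw [Finset.mem_Ico] at hl; omega)) hxl hxZ

end Confined

lemma Confined.of_eq_zero_of_eq_one (hZ : IsWeakImprovement e f Z) (ha : e a = 0) (hb : e b = 1) :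
    Confined e f Z a b := by
  intro j _
  filter_upwards [measure_eq_zero_iff_ae_notMem.1 (measure_singleton (0:ℝ))] with x hx0 hxZ _
  have hx := hZ.subset_Icc j hxZ
  rw [ha, hb]
  exact ⟨hx.1.lt_of_ne (Ne.symm hx0), hx.2⟩

lemma measure_eq_zero_of_disjoint (hcov : Ioc (e a) (e b) ≤ᵐ[volume] ⋃ j ∈ Finset.Ico a b, Z j)
    (ha : e a = 0) (hb : e b = 1) {T : Set ℝ} (hT : T ⊆ Icc 0 1)
    (hdisj : ∀ j ∈ Finset.Ico a b, Disjoint T (Z j)) : volume T = 0 := by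
  rw [ha, hb] at hcov
  refine measure_mono_null (fun x hx => ?_) (measure_union_null (measure_singleton (0:ℝ))
    (ae_le_set.1 hcov))
  rcases (hT hx).1.eq_or_lt with h0 | hpos
  · exact Or.inl h0.symm
  · refine Or.inr ⟨⟨hpos, (hT hx).2⟩, fun hxZ => ?_⟩
    obtain ⟨j, hj, hxj⟩ := mem_iUnion₂.1 hxZ
    exact disjoint_left.1 (hdisj j hj) hx hxj

lemma Tight.trans (he : Monotone e) (h₁ : Tight e f Z a s) (h₂ : Tight e f Z s b)
    (has : a ≤ s) (hsb : s ≤ b) : Tight e f Z a b := by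
  refine ⟨fun j hj => ?_, ?_⟩
  · rw [Finset.mem_Ico] at hj
    rcases lt_or_ge j s with hjs | hjs
    · exact h₁.1 j (Finset.mem_Ico.2 ⟨hj.1, hjs⟩)
    · exact h₂.1 j (Finset.mem_Ico.2 ⟨hjs, hj.2⟩)
  · rw [← Ioc_union_Ioc_eq_Ioc (he has) (he hsb), ← Finset.Ico_union_Ico_eq_Ico has hsb,
      Finset.set_biUnion_union]
    exact h₁.2.union h₂.2

namespace MLRPProfile

variable (hP : MLRPProfile e f)
include hP

lemma Ioc_subset_Icc (i j : ℕ) : Ioc (e i) (e j) ⊆ Icc 0 1 :=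
  fun _ hx => ⟨(hP.mem_Icc i).1.trans hx.1.le, hx.2.trans (hP.mem_Icc j).2⟩

lemma exists_pos {t : ℕ} (ht : e t < e (t + 1)) :
    ∃ x ∈ Ioo (e t) (e (t + 1)), x ∈ Icc (0:ℝ) 1 ∧ 0 < f t x := by
  obtain ⟨x, hx⟩ := nonempty_Ioo.2 ht
  exact ⟨x, hx, hP.Ioc_subset_Icc _ _ (Ioo_subset_Ioc_self hx), hP.pos t x hx⟩

lemma leftVanishing_succ {t : ℕ} (ht : e t < e (t + 1)) (h0 : f t (e (t + 1)) = 0) :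
    LeftVanishing e f (t + 1) := by
  obtain ⟨x₀, hx₀, hx₀I, hpos⟩ := hP.exists_pos ht
  intro j hj y hy hey
  have hft : f t y = 0 :=
    hP.eq_zero_right t x₀ hx₀I _ (hP.mem_Icc _) y hy hx₀.2 hey hpos h0
  rcases (Nat.lt_succ_iff.1 hj).lt_or_eq with hjt | rfl
  · have := hP.mul_le_mul hjt x₀ hx₀I y hy (hx₀.2.le.trans hey)
    rw [hft, mul_zero] at this
    nlinarith [hP.nonneg j y hy]
  · exact hft

lemma rightVanishing {t : ℕ} (ht : e t < e (t + 1)) (h0 : f t (e t) = 0) :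
    RightVanishing e f t := by
  obtain ⟨x₀, hx₀, hx₀I, hpos⟩ := hP.exists_pos ht
  intro j hj y hy hye
  have hft : f t y = 0 :=
    hP.eq_zero_left t x₀ hx₀I _ (hP.mem_Icc _) y hy hx₀.1 hye hpos h0
  rcases hj.lt_or_eq with htj | rfl
  · have := hP.mul_le_mul htj y hy x₀ hx₀I (hye.trans hx₀.1.le)
    rw [hft, zero_mul] at this
    nlinarith [hP.nonneg j y hy]
  · exact hft

lemma mul_div_mul_le {t u : ℕ} (htu : t < u) {c x ω : ℝ} (hc : c ∈ Icc (0:ℝ) 1)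
    (hx : x ∈ Icc (0:ℝ) 1) (hxc : x ≤ c) (hu : 0 < f u c) (hω : 0 ≤ ω) :
    ω * f t c / f u c * f u x ≤ ω * f t x := by
  rw [div_mul_eq_mul_div, div_le_iff₀ hu, mul_assoc, mul_assoc]
  exact mul_le_mul_of_nonneg_left (hP.mul_le_mul htu x hx c hc hxc) hω

lemma le_mul_div_mul {t u : ℕ} (htu : t < u) {c x ω : ℝ} (hc : c ∈ Icc (0:ℝ) 1)
    (hx : x ∈ Icc (0:ℝ) 1) (hcx : c ≤ x) (hu : 0 < f u c) (hω : 0 ≤ ω) :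
    ω * f t x ≤ ω * f t c / f u c * f u x := by
  rw [div_mul_eq_mul_div, le_div_iff₀ hu, mul_assoc, mul_assoc]
  exact mul_le_mul_of_nonneg_left (hP.mul_le_mul htu c hc x hx hcx) hω

lemma isEnvelopeWeight_succ_of_le {w : ℕ → ℝ} (hw : IsEnvelopeWeight e f a b w)
    (hb : e (b + 1) ≤ e b) : IsEnvelopeWeight e f a (b + 1) (update w b 0) := by
  obtain ⟨hw0, hwpos, henv⟩ := hw
  refine ⟨fun j => ?_, fun j hj hje => ?_, fun l hl x hx j hj => ?_⟩
  · rcases eq_or_ne j b with rfl | hjb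
    · simp
    · simpa [hjb] using hw0 j
  · have hjb : j ≠ b := by rintro rfl; exact (hje.trans_le hb).false
    simp only [Finset.mem_Ico] at hj
    simpa [hjb] using hwpos j (Finset.mem_Ico.2 ⟨hj.1, by omega⟩) hje
  · have hlb : l ≠ b := by rintro rfl; exact (hx.1.trans_le (hx.2.trans hb)).false
    simp only [Finset.mem_Ico] at hl hj
    have hxI := hP.Ioc_subset_Icc _ _ hx
    rw [update_of_ne hlb]
    rcases eq_or_ne j b with rfl | hjb
    · simpa using mul_nonneg (hw0 l) (hP.nonneg l x hxI)
    · rw [update_of_ne hjb]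
      exact henv l (Finset.mem_Ico.2 ⟨hl.1, by omega⟩) x hx j (Finset.mem_Ico.2 ⟨hj.1, by omega⟩)

lemma isEnvelopeWeight_succ_of_lt {w : ℕ → ℝ} (hw : IsEnvelopeWeight e f a b w) {ω : ℝ}
    (hω : 0 < ω) (hleft : ∀ l ∈ Finset.Ico a b, ∀ x ∈ Ioc (e l) (e (l + 1)),
      ω * f b x ≤ w l * f l x)
    (hright : ∀ x ∈ Icc (e b) 1, ∀ j ∈ Finset.Ico a b, w j * f j x ≤ ω * f b x) :
    IsEnvelopeWeight e f a (b + 1) (update w b ω) ∧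
      ∀ x ∈ Icc (e b) 1, ∀ j ∈ Finset.Ico a (b + 1), update w b ω j * f j x ≤ ω * f b x := by
  obtain ⟨hw0, hwpos, henv⟩ := hw
  have hdom : ∀ x ∈ Icc (e b) 1, ∀ j ∈ Finset.Ico a (b + 1),
      update w b ω j * f j x ≤ ω * f b x := by
    intro x hx j hj
    rcases eq_or_ne j b with rfl | hjb
    · simp
    · simp only [Finset.mem_Ico] at hj
      rw [update_of_ne hjb]
      exact hright x hx j (Finset.mem_Ico.2 ⟨hj.1, by omega⟩)
  refine ⟨⟨fun j => ?_, fun j hj hje => ?_, fun l hl x hx j hj => ?_⟩, hdom⟩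
  · rcases eq_or_ne j b with rfl | hjb
    · simpa using hω.le
    · simpa [hjb] using hw0 j
  · rcases eq_or_ne j b with rfl | hjb
    · simpa using hω
    · simp only [Finset.mem_Ico] at hj
      simpa [hjb] using hwpos j (Finset.mem_Ico.2 ⟨hj.1, by omega⟩) hje
  · simp only [Finset.mem_Ico] at hl
    rcases eq_or_ne l b with rfl | hlb
    · rw [update_self]
      exact hdom x ⟨hx.1.le, (hP.Ioc_subset_Icc _ _ hx).2⟩ j hj
    · have hl' : l ∈ Finset.Ico a b := Finset.mem_Ico.2 ⟨hl.1, by omega⟩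
      rw [update_of_ne hlb]
      rcases eq_or_ne j b with rfl | hjb
      · simpa using hleft l hl' x hx
      · simp only [Finset.mem_Ico] at hj
        rw [update_of_ne hjb]
        exact henv l hl' x hx j (Finset.mem_Ico.2 ⟨hj.1, by omega⟩)

lemma isRightFrontier_succ_of_le {w : ℕ → ℝ} (hw : IsEnvelopeWeight e f a b w)
    (hfront : IsRightFrontier e f a b w) (hb : e (b + 1) ≤ e b) :
    IsRightFrontier e f a (b + 1) (update w b 0) := by
  have heq : e (b + 1) = e b := le_antisymm hb (hP.monotone b.le_succ)
  rcases hfront with hzero | ⟨t, ht, hte, htb, hdom⟩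
  · refine Or.inl fun j hj => ?_
    rcases eq_or_ne j b with rfl | hjb
    · simp
    · rw [Finset.mem_Ico] at hj
      simpa [hjb] using hzero j (Finset.mem_Ico.2 ⟨hj.1, by omega⟩)
  · rw [Finset.mem_Ico] at ht
    refine Or.inr ⟨t, Finset.mem_Ico.2 ⟨ht.1, by omega⟩, hte, htb.trans heq.symm,
      fun x hx j hj => ?_⟩
    rw [update_of_ne (by omega : t ≠ b)]
    rcases eq_or_ne j b with rfl | hjb
    · simpa using mul_nonneg (hw.1 t) (hP.nonneg t x ⟨(hP.mem_Icc _).1.trans hx.1, hx.2⟩)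
    · rw [Finset.mem_Ico] at hj
      rw [update_of_ne hjb]
      exact hdom x (by rwa [← heq]) j (Finset.mem_Ico.2 ⟨hj.1, by omega⟩)

/-- The weight of a new agent is fixed by matching the frontier agent at the common cut `e b`. -/
lemma exists_weight_of_lt {w : ℕ → ℝ} (hw : IsEnvelopeWeight e f a b w)
    (hfront : IsRightFrontier e f a b w)
    (hR : ∀ t ∈ Finset.Ico a b, e t < e (t + 1) → 0 < f t (e (t + 1)))
    (hL : a < b → 0 < f b (e b)) :
    ∃ ω : ℝ, 0 < ω ∧
      (∀ l ∈ Finset.Ico a b, ∀ x ∈ Ioc (e l) (e (l + 1)), ω * f b x ≤ w l * f l x) ∧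
      ∀ x ∈ Icc (e b) 1, ∀ j ∈ Finset.Ico a b, w j * f j x ≤ ω * f b x := by
  rcases hfront with hzero | ⟨t, ht, hte, htb, hdom⟩
  · refine ⟨1, one_pos, fun l hl x hx => ?_, fun x hx j hj => ?_⟩
    · exact absurd (hzero l hl) (hw.2.1 l hl (hx.1.trans_le hx.2)).ne'
    · rw [hzero j hj, zero_mul, one_mul]
      exact hP.nonneg b x ⟨(hP.mem_Icc _).1.trans hx.1, hx.2⟩
  have hft : 0 < f t (e b) := htb ▸ hR t ht hte
  rw [Finset.mem_Ico] at ht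
  have hfb : 0 < f b (e b) := hL (by omega)
  have hwt : 0 < w t := hw.2.1 t (Finset.mem_Ico.2 ht) hte
  refine ⟨w t * f t (e b) / f b (e b), by positivity, fun l hl x hx => ?_, fun x hx j hj => ?_⟩
  · have hxb : x ≤ e b := hx.2.trans (hP.monotone (by rw [Finset.mem_Ico] at hl; omega))
    exact (hP.mul_div_mul_le ht.2 (hP.mem_Icc b) (hP.Ioc_subset_Icc _ _ hx) hxb hfb
      hwt.le).trans (hw.2.2 l hl x hx t (Finset.mem_Ico.2 ht))
  · have hxI : x ∈ Icc (0:ℝ) 1 := ⟨(hP.mem_Icc _).1.trans hx.1, hx.2⟩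
    exact (hdom x hx j hj).trans (hP.le_mul_div_mul ht.2 (hP.mem_Icc b) hxI hx.1 hfb hwt.le)

lemma exists_isEnvelopeWeight_isRightFrontier (hab : a ≤ b)
    (hR : ∀ t, a ≤ t → t + 1 < b → e t < e (t + 1) → 0 < f t (e (t + 1)))
    (hL : ∀ t, a < t → t < b → e t < e (t + 1) → 0 < f t (e t)) :
    ∃ w, IsEnvelopeWeight e f a b w ∧ IsRightFrontier e f a b w := by
  induction b, hab using Nat.le_induction with
  | base => exact ⟨0, ⟨fun _ => le_rfl, by simp, by simp⟩, Or.inl (by simp)⟩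
  | succ b hab ih =>
    obtain ⟨w, hw, hfront⟩ := ih (fun t h₁ h₂ => hR t h₁ (by omega))
      (fun t h₁ h₂ => hL t h₁ (by omega))
    rcases le_or_gt (e (b + 1)) (e b) with hb | hb
    · exact ⟨_, hP.isEnvelopeWeight_succ_of_le hw hb, hP.isRightFrontier_succ_of_le hw hfront hb⟩
    obtain ⟨ω, hω, hleft, hright⟩ := hP.exists_weight_of_lt hw hfront
      (fun t ht => hR t (Finset.mem_Ico.1 ht).1 (by rw [Finset.mem_Ico] at ht; omega))
      (fun hab' => hL b hab' b.lt_succ_self hb)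
    obtain ⟨hw', hdom'⟩ := hP.isEnvelopeWeight_succ_of_lt hw hω hleft hright
    refine ⟨_, hw', Or.inr ⟨b, Finset.mem_Ico.2 ⟨hab, b.lt_succ_self⟩, hb, rfl,
      fun x hx j hj => ?_⟩⟩
    simpa using hdom' x ⟨hb.le.trans hx.1, hx.2⟩ j hj

lemma exists_isEnvelopeWeight (hab : a ≤ b)
    (hR : ∀ t, a ≤ t → t + 1 < b → e t < e (t + 1) → 0 < f t (e (t + 1)))
    (hL : ∀ t, a < t → t < b → e t < e (t + 1) → 0 < f t (e t)) :
    ∃ w, IsEnvelopeWeight e f a b w :=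
  (hP.exists_isEnvelopeWeight_isRightFrontier hab hR hL).imp fun _ h => h.1

lemma iUnion_Ioc (a b : ℕ) : ⋃ l ∈ Finset.Ico a b, Ioc (e l) (e (l + 1)) = Ioc (e a) (e b) := by
  simpa using hP.monotone.biUnion_Ico_Ioc_map_succ a b

lemma pairwise_disjoint_Ioc : Pairwise (Disjoint on fun l => Ioc (e l) (e (l + 1))) :=
  hP.monotone.pairwise_disjoint_on_Ioc_succ

lemma envelope_eq {w : ℕ → ℝ} {I : Finset ℕ} {l : ℕ} (hl : l ∈ I) {x : ℝ}
    (hx : x ∈ Ioc (e l) (e (l + 1))) : envelope e f w I x = w l * f l x := by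
  rw [envelope, Finset.sum_eq_single l (fun j _ hjl => indicator_of_notMem
    (disjoint_right.1 (hP.pairwise_disjoint_Ioc hjl) hx) _) (fun h => absurd hl h),
    indicator_of_mem hx]

lemma integrable_envelope (w : ℕ → ℝ) (I : Finset ℕ) : Integrable (envelope e f w I) :=
  integrable_finsetSum _ fun l _ => IntegrableOn.integrable_indicator
    (((hP.integrableOn l).mono_set (hP.Ioc_subset_Icc l (l + 1))).const_mul (w l))
    measurableSet_Ioc

lemma envelope_nonneg {w : ℕ → ℝ} (hw : ∀ j, 0 ≤ w j) (I : Finset ℕ) (x : ℝ) :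
    0 ≤ envelope e f w I x :=
  Finset.sum_nonneg fun l _ => indicator_nonneg (fun y hy =>
    mul_nonneg (hw l) (hP.nonneg l y (hP.Ioc_subset_Icc _ _ hy))) x

lemma setIntegral_envelope (w : ℕ → ℝ) (a b : ℕ) :
    ∫ x in Ioc (e a) (e b), envelope e f w (Finset.Ico a b) x =
      ∑ l ∈ Finset.Ico a b, w l * ∫ x in Ioc (e l) (e (l + 1)), f l x := by
  rw [← hP.iUnion_Ioc, integral_biUnion_finset _ (fun _ _ => measurableSet_Ioc)
    (hP.pairwise_disjoint_Ioc.set_pairwise _) fun _ _ => (hP.integrable_envelope w _).integrableOn]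
  refine Finset.sum_congr rfl fun l hl => ?_
  rw [setIntegral_congr_fun measurableSet_Ioc fun x hx => hP.envelope_eq hl hx, integral_const_mul]

lemma mul_integral_le_setIntegral_envelope (hZ : IsWeakImprovement e f Z)
    (hconf : Confined e f Z a b) {w : ℕ → ℝ} (hw : IsEnvelopeWeight e f a b w) {j : ℕ}
    (hj : j ∈ Finset.Ico a b) :
    w j * ∫ x in Z j, f j x ≤
      ∫ x in Z j ∩ Ioc (e a) (e b), envelope e f w (Finset.Ico a b) x := by
  have hconfj : ∫ x in Z j, f j x = ∫ x in Z j ∩ Ioc (e a) (e b), f j x := by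
    refine setIntegral_eq_of_subset_of_ae_sdiff_eq_zero (hZ.measurableSet j).nullMeasurableSet
      inter_subset_left ?_
    filter_upwards [hconf j hj] with x hx hxd
    by_contra hfx
    exact hxd.2 ⟨hxd.1, hx hxd.1 hfx⟩
  rw [hconfj, ← integral_const_mul]
  refine setIntegral_mono_on (((hP.integrableOn j).mono_set
    (inter_subset_left.trans (hZ.subset_Icc j))).const_mul (w j))
    (hP.integrable_envelope w _).integrableOn ((hZ.measurableSet j).inter measurableSet_Ioc)
    fun x hx => ?_
  obtain ⟨l, hl, hxl⟩ := mem_iUnion₂.1 ((hP.iUnion_Ioc a b).symm ▸ hx.2)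
  rw [hP.envelope_eq hl hxl]
  exact hw.2.2 l hl x hxl j hj

lemma ae_pos_envelope {w : ℕ → ℝ} (hw : IsEnvelopeWeight e f a b w) :
    ∀ᵐ x, x ∈ Ioc (e a) (e b) → 0 < envelope e f w (Finset.Ico a b) x := by
  filter_upwards [measure_eq_zero_iff_ae_notMem.1 ((countable_range e).measure_zero volume)]
    with x hx hxS
  obtain ⟨l, hl, hxl⟩ := mem_iUnion₂.1 ((hP.iUnion_Ioc a b).symm ▸ hxS)
  have hlt : x < e (l + 1) := hxl.2.lt_of_ne fun h => hx ⟨l + 1, h.symm⟩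
  rw [hP.envelope_eq hl hxl]
  exact mul_pos (hw.2.1 l hl (hxl.1.trans hlt)) (hP.pos l x ⟨hxl.1, hlt⟩)

/-- Weighted welfare: the cut allocation maximises `∑ w j * value j` over all allocations. -/
lemma tight_of_isEnvelopeWeight (hZ : IsWeakImprovement e f Z) (hconf : Confined e f Z a b)
    {w : ℕ → ℝ} (hw : IsEnvelopeWeight e f a b w) : Tight e f Z a b := by
  set I := Finset.Ico a b
  set S := Ioc (e a) (e b)
  set M := envelope e f w I
  set U := ⋃ j ∈ I, Z j ∩ S
  have hMint := hP.integrable_envelope w I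
  have hU : ∫ x in U, M x = ∑ j ∈ I, ∫ x in Z j ∩ S, M x :=
    integral_biUnion_finset _ (fun j _ => (hZ.measurableSet j).inter measurableSet_Ioc)
      (fun i _ j _ hij => (hZ.pairwise_disjoint hij).mono inter_subset_left inter_subset_left)
      fun _ _ => hMint.integrableOn
  have hle : ∀ j ∈ I, w j * ∫ x in Ioc (e j) (e (j + 1)), f j x ≤ w j * ∫ x in Z j, f j x :=
    fun j _ => mul_le_mul_of_nonneg_left (hZ.le_integral j) (hw.1 j)
  have hUS : ∫ x in U, M x ≤ ∫ x in S, M x :=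
    setIntegral_mono_set hMint.integrableOn (ae_of_all _ (hP.envelope_nonneg hw.1 I))
      (Eventually.of_forall (iUnion₂_subset fun _ _ => inter_subset_right))
  have hchain : ∑ j ∈ I, w j * ∫ x in Z j, f j x ≤ ∫ x in U, M x :=
    hU ▸ Finset.sum_le_sum fun j hj => hP.mul_integral_le_setIntegral_envelope hZ hconf hw hj
  have htotal := hP.setIntegral_envelope w a b
  refine ⟨fun j hj => ?_, ?_⟩
  · have hsum := (Finset.sum_eq_sum_iff_of_le hle).1
      (le_antisymm (Finset.sum_le_sum hle) (hchain.trans (hUS.trans htotal.le)))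
    rcases lt_or_ge (e j) (e (j + 1)) with hje | hje
    · exact (mul_left_cancel₀ (hw.2.1 j hj hje).ne' (hsum j hj)).symm
    · rw [hZ.eq_empty j hje, Ioc_eq_empty hje.not_gt]
  · refine (ae_le_of_setIntegral_le hMint (ae_of_all _ (hP.envelope_nonneg hw.1 I))
      (hP.ae_pos_envelope hw) measurableSet_Ioc ?_ (iUnion₂_subset fun _ _ => inter_subset_right)
      ?_).trans (Eventually.of_forall (iUnion₂_mono fun _ _ => inter_subset_left))
    · exact Finset.measurableSet_biUnion _ fun j _ => (hZ.measurableSet j).inter measurableSet_Ioc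
    · exact htotal.trans_le ((Finset.sum_le_sum hle).trans hchain)

/-- Split at a cut that one side of the agents does not value beyond; if there is none, every
link between adjacent nonempty pieces is positive on both sides and envelope weights exist. -/
theorem tight (hZ : IsWeakImprovement e f Z) (hab : a ≤ b) (hconf : Confined e f Z a b) :
    Tight e f Z a b := by
  induction h : b - a using Nat.strong_induction_on generalizing a b with
  | _ n ih =>
    by_cases hsplit : ∃ s, a < s ∧ s < b ∧ (LeftVanishing e f s ∨ RightVanishing e f s)
    · obtain ⟨s, has, hsb, hs | hs⟩ := hsplit
      · have h₁ := ih (s - a) (by omega) has.le (hconf.left_of_leftVanishing hZ hs hsb.le) rfl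
        have h₂ := ih (b - s) (by omega) hsb.le (hconf.right_of_ae_le hZ h₁.2 has.le) rfl
        exact h₁.trans hP.monotone h₂ has.le hsb.le
      · have h₂ := ih (b - s) (by omega) hsb.le (hconf.right_of_rightVanishing hZ hs has.le) rfl
        have h₁ := ih (s - a) (by omega) has.le (hconf.left_of_ae_le hZ h₂.2 hsb.le) rfl
        exact h₁.trans hP.monotone h₂ has.le hsb.le
    push Not at hsplit
    obtain ⟨w, hw⟩ := hP.exists_isEnvelopeWeight hab
      (fun t hat htb ht => (hP.nonneg t _ (hP.mem_Icc _)).lt_of_ne fun h0 =>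
        (hsplit (t + 1) (by omega) htb).1 (hP.leftVanishing_succ ht h0.symm))
      (fun t hat htb ht => (hP.nonneg t _ (hP.mem_Icc _)).lt_of_ne fun h0 =>
        (hsplit t hat htb).2 (hP.rightVanishing ht h0.symm))
    exact hP.tight_of_isEnvelopeWeight hZ hconf hw

end MLRPProfile

end Profile

def cutSeq {n : ℕ} (c : Fin (n + 1) → ℝ) (j : ℕ) : ℝ :=
  c ⟨min j n, Nat.lt_succ_of_le (min_le_right j n)⟩

section CutSeq

variable {n : ℕ} {c : Fin (n + 1) → ℝ}

lemma cutSeq_castSucc (i : Fin n) : cutSeq c i = c i.castSucc :=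
  congrArg c (Fin.ext (min_eq_left i.is_lt.le))

lemma cutSeq_succ (i : Fin n) : cutSeq c (i + 1) = c i.succ :=
  congrArg c (Fin.ext (min_eq_left i.is_lt))

lemma cutSeq_of_le {j : ℕ} (hj : n ≤ j) : cutSeq c j = c (Fin.last n) :=
  congrArg c (Fin.ext (min_eq_right hj))

lemma cutSeq_zero : cutSeq c 0 = c 0 :=
  congrArg c (Fin.ext (min_eq_left n.zero_le))

lemma monotone_cutSeq (hc : Monotone c) : Monotone (cutSeq c) :=
  fun _ _ hij => hc (Fin.mk_le_mk.2 (min_le_min_right n hij))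

end CutSeq

lemma Fin.extend_val_cases {n : ℕ} {β : Type*} (g : Fin n → β) (d : ℕ → β) (j : ℕ) :
    (∃ i : Fin n, (i : ℕ) = j ∧ extend Fin.val g d j = g i) ∨
      (n ≤ j ∧ extend Fin.val g d j = d j) := by
  rcases lt_or_ge j n with hj | hj
  · exact Or.inl ⟨⟨j, hj⟩, rfl, Fin.val_injective.extend_apply g d ⟨j, hj⟩⟩
  · exact Or.inr ⟨hj, extend_apply' g d j fun ⟨i, hi⟩ => (hi ▸ i.is_lt).not_ge hj⟩

section Application

variable {n : ℕ} {u : Fin n → ℝ → ℝ} {q : Fin n → ℝ} {k : ℝ} {c : Fin (n + 1) → ℝ}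
  {e : ℕ → ℝ} {W : Fin n → Set ℝ}

lemma mlrpProfile_of_singlePeaked (hu : ∀ i, SinglePeakedD (u i) (q i) k) (hq : StrictMono q)
    (hc : Monotone c) (hc0 : c 0 = 0) (hc1 : c (Fin.last n) = 1) {X : Fin n → Set ℝ}
    (hX : ∀ i, X i =ᵐ[volume] Ioc (c i.castSucc) (c i.succ))
    (hnw : ∀ i, volume (X i \ Supp01 (u i)) = 0) :
    MLRPProfile (cutSeq c) (extend Fin.val u 0) := by
  have hmem : ∀ i, c i ∈ Icc (0:ℝ) 1 :=
    fun i => ⟨hc0 ▸ hc (Fin.zero_le i), hc1 ▸ hc (Fin.le_last i)⟩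
  have hempty : ∀ j, n ≤ j → cutSeq c (j + 1) = cutSeq c j := fun j hj => by
    rw [cutSeq_of_le hj, cutSeq_of_le (hj.trans j.le_succ)]
  refine ⟨monotone_cutSeq hc, fun j => hmem _, fun j x hx => ?_, fun j => ?_, fun j x hx => ?_,
    fun {j j'} hjj' x hx y hy hxy => ?_, fun j x hx y hy z hz hxy hyz hpos h0 => ?_,
    fun j x hx y hy z hz hyx hzy hpos h0 => ?_⟩
  · rcases Fin.extend_val_cases u 0 j with ⟨i, rfl, hi⟩ | ⟨-, hj0⟩
    · exact hi ▸ (hu i).nonneg hx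
    · simp [hj0]
  · rcases Fin.extend_val_cases u 0 j with ⟨i, rfl, hi⟩ | ⟨-, hj0⟩
    · exact hi ▸ (hu i).integrableOn
    · exact hj0 ▸ integrableOn_zero
  · rcases Fin.extend_val_cases u 0 j with ⟨i, rfl, hi⟩ | ⟨hj, -⟩
    · rw [cutSeq_castSucc, cutSeq_succ] at hx
      have hnull : volume (Ioc (c i.castSucc) (c i.succ) \ Supp01 (u i)) = 0 :=
        measure_mono_null (fun x hx => (em (x ∈ X i)).elim (fun h => Or.inr ⟨h, hx.2⟩)
          (fun h => Or.inl ⟨hx.1, h⟩))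
          (measure_union_null (ae_eq_set.1 (hX i)).2 (hnw i))
      exact hi ▸ (hu i).pos_of_mem_Ioo (hmem _) (hmem _) hnull hx
    · rw [hempty j hj] at hx
      exact absurd hx (by simp)
  · rcases Fin.extend_val_cases u 0 j' with ⟨i', rfl, hi'⟩ | ⟨-, hj'0⟩
    · rcases Fin.extend_val_cases u 0 j with ⟨i, rfl, hi⟩ | ⟨hj, -⟩
      · rw [hi, hi']
        exact (hu i).mul_le_mul_of_peak_lt (hu i') (hq hjj') hx hy hxy
      · exact absurd (hjj'.trans i'.is_lt) hj.not_gt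
    · simp [hj'0]
  · rcases Fin.extend_val_cases u 0 j with ⟨i, rfl, hi⟩ | ⟨-, hj0⟩
    · rw [hi] at hpos h0 ⊢
      exact (hu i).eq_zero_right_of_pos hx hy hz hxy hyz hpos h0
    · simp [hj0] at hpos
  · rcases Fin.extend_val_cases u 0 j with ⟨i, rfl, hi⟩ | ⟨-, hj0⟩
    · rw [hi] at hpos h0 ⊢
      exact (hu i).eq_zero_left_of_pos hx hy hz hyx hzy hpos h0
    · simp [hj0] at hpos

noncomputable def nonemptyExtend (e : ℕ → ℝ) (W : Fin n → Set ℝ) : ℕ → Set ℝ :=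
  extend Fin.val (fun i => if e i < e (i + 1) then W i else ∅) fun _ => ∅

lemma nonemptyExtend_of_lt {i : Fin n} (hi : e i < e (i + 1)) :
    nonemptyExtend e W i = W i := by
  rw [nonemptyExtend, Fin.val_injective.extend_apply, if_pos hi]

lemma mem_nonemptyExtend {j : ℕ} {x : ℝ} :
    x ∈ nonemptyExtend e W j ↔ ∃ i : Fin n, (i : ℕ) = j ∧ e j < e (j + 1) ∧ x ∈ W i := by
  rcases Fin.extend_val_cases (fun i => if e i < e (i + 1) then W i else ∅) (fun _ => ∅) j
    with ⟨i, rfl, h⟩ | ⟨hj, h⟩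
  · rw [nonemptyExtend, h]
    refine ⟨fun hx => ?_, fun ⟨i', hi', hlt, hx⟩ => ?_⟩
    · split_ifs at hx with hlt
      · exact ⟨i, rfl, hlt, hx⟩
      · exact absurd hx (notMem_empty x)
    · obtain rfl := Fin.ext hi'
      rwa [if_pos hlt]
  · rw [nonemptyExtend, h]
    simp only [mem_empty_iff_false, false_iff]
    rintro ⟨i, rfl, -⟩
    exact hj.not_gt i.is_lt

lemma measurableSet_nonemptyExtend (hW : ∀ i, MeasurableSet (W i)) (j : ℕ) :
    MeasurableSet (nonemptyExtend e W j) := by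
  rcases Fin.extend_val_cases (fun i => if e i < e (i + 1) then W i else ∅) (fun _ => ∅) j
    with ⟨i, rfl, h⟩ | ⟨-, h⟩
  · rw [nonemptyExtend, h]
    split_ifs
    exacts [hW i, MeasurableSet.empty]
  · rw [nonemptyExtend, h]
    exact MeasurableSet.empty

lemma disjoint_nonemptyExtend (hW : Pairwise (Disjoint on W))
    {i : Fin n} (hi : ¬ e i < e (i + 1)) (j : ℕ) : Disjoint (W i) (nonemptyExtend e W j) := by
  refine disjoint_right.2 fun x hx hxi => ?_
  obtain ⟨i', rfl, hlt, hxi'⟩ := mem_nonemptyExtend.1 hx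
  have hii' : i' ≠ i := by rintro rfl; exact hi hlt
  exact disjoint_left.1 (hW hii') hxi' hxi

lemma isWeakImprovement_nonemptyExtend (hWm : ∀ i, MeasurableSet (W i))
    (hWI : ∀ i, W i ⊆ Icc 0 1) (hWd : Pairwise (Disjoint on W))
    (hle : ∀ i, ∫ x in Ioc (c i.castSucc) (c i.succ), u i x ≤ ∫ x in W i, u i x) :
    IsWeakImprovement (cutSeq c) (extend Fin.val u 0) (nonemptyExtend (cutSeq c) W) := by
  have hempty : ∀ j, cutSeq c (j + 1) ≤ cutSeq c j → nonemptyExtend (cutSeq c) W j = ∅ :=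
    fun j hj => eq_empty_of_forall_notMem fun x hx =>
      (mem_nonemptyExtend.1 hx).elim fun _ h => hj.not_gt h.2.1
  refine ⟨measurableSet_nonemptyExtend hWm, fun j x hx => ?_, fun j j' hjj' => ?_, hempty,
    fun j => ?_⟩
  · obtain ⟨i, -, -, hxi⟩ := mem_nonemptyExtend.1 hx
    exact hWI i hxi
  · refine disjoint_left.2 fun x hx hx' => ?_
    obtain ⟨i, rfl, -, hxi⟩ := mem_nonemptyExtend.1 hx
    obtain ⟨i', rfl, -, hxi'⟩ := mem_nonemptyExtend.1 hx'
    exact disjoint_left.1 (hWd (ne_of_apply_ne Fin.val hjj')) hxi hxi'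
  · by_cases hne : cutSeq c j < cutSeq c (j + 1)
    · obtain ⟨i, rfl⟩ : ∃ i : Fin n, (i : ℕ) = j := ⟨⟨j, lt_of_not_ge fun hj =>
        hne.ne' (by rw [cutSeq_of_le hj, cutSeq_of_le (hj.trans j.le_succ)])⟩, rfl⟩
      rw [nonemptyExtend_of_lt hne, Fin.val_injective.extend_apply, cutSeq_castSucc, cutSeq_succ]
      exact hle i
    · rw [hempty j (not_lt.1 hne), Ioc_eq_empty hne]

theorem setIntegral_eq_of_forall_le (hu : ∀ i, SinglePeakedD (u i) (q i) k) (hq : StrictMono q)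
    (hc : Monotone c) (hc0 : c 0 = 0) (hc1 : c (Fin.last n) = 1) {X : Fin n → Set ℝ}
    (hX : ∀ i, X i =ᵐ[volume] Ioc (c i.castSucc) (c i.succ))
    (hnw : ∀ i, volume (X i \ Supp01 (u i)) = 0) (hWm : ∀ i, MeasurableSet (W i))
    (hWI : ∀ i, W i ⊆ Icc 0 1) (hWd : Pairwise (Disjoint on W))
    (hle : ∀ i, ∫ x in Ioc (c i.castSucc) (c i.succ), u i x ≤ ∫ x in W i, u i x) (i : Fin n) :
    ∫ x in W i, u i x = ∫ x in Ioc (c i.castSucc) (c i.succ), u i x := by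
  have hP := mlrpProfile_of_singlePeaked hu hq hc hc0 hc1 hX hnw
  have hZ := isWeakImprovement_nonemptyExtend (c := c) hWm hWI hWd hle
  have he0 : cutSeq c 0 = 0 := cutSeq_zero.trans hc0
  have hen : cutSeq c n = 1 := (cutSeq_of_le le_rfl).trans hc1
  obtain ⟨heq, hcov⟩ := hP.tight hZ n.zero_le (Confined.of_eq_zero_of_eq_one hZ he0 hen)
  by_cases hne : cutSeq c i < cutSeq c (i + 1)
  · have := heq i (Finset.mem_Ico.2 ⟨i.val.zero_le, i.is_lt⟩)
    rwa [nonemptyExtend_of_lt hne, Fin.val_injective.extend_apply, cutSeq_castSucc,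
      cutSeq_succ] at this
  · have hWi : volume (W i) = 0 := measure_eq_zero_of_disjoint hcov he0 hen (hWI i)
      fun j _ => disjoint_nonemptyExtend hWd hne j
    rw [cutSeq_castSucc, cutSeq_succ] at hne
    rw [Ioc_eq_empty hne, setIntegral_empty, setIntegral_measure_zero _ hWi]

end Application

theorem statement2_general {n : ℕ} (v : Fin n → ℝ → ℝ) (p : Fin n → ℝ) (k : ℝ)
    (hsp : ∀ i, SinglePeakedD (v i) (p i) k)
    (X : Fin n → Set ℝ)
    (hnw : NonWasteful v X) (hpp : ConnPeakPres p X) :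
    ParetoOpt v X := by
  rintro ⟨Y, ⟨hYm, hYdisj, hYcov⟩, hle, i₀, hlt⟩
  obtain ⟨c, σ, hc, hc0, hc1, hσ, hXc⟩ := hpp
  obtain ⟨i, rfl⟩ := σ.surjective i₀
  have hval : ∀ i, pieceVal (v (σ i)) (X (σ i)) =
      ∫ x in Ioc (c i.castSucc) (c i.succ), v (σ i) x := fun i => setIntegral_congr_set (hXc i)
  have hYI : ∀ i, Y i ⊆ Icc 0 1 := fun i => hYcov ▸ subset_iUnion Y i
  have hYd : Pairwise (Disjoint on (Y ∘ σ)) := fun i j hij =>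
    disjoint_iff_inter_eq_empty.2 (hYdisj _ _ (σ.injective.ne hij))
  refine hlt.ne ((hval i).trans (setIntegral_eq_of_forall_le (fun i => hsp (σ i)) hσ hc hc0 hc1
    hXc (fun i => hnw (σ i)) (fun i => hYm (σ i)) (fun i => hYI (σ i)) hYd
    (fun i => (hval i).symm.trans_le (hle (σ i))) i).symm)

/-- Sufficiency: every non-wasteful, connected, peak-preserving allocation is
Pareto optimal. -/
theorem statement2 {n : ℕ} (v : Fin n → ℝ → ℝ) (p : Fin n → ℝ) (k : ℝ)
    (hsp : ∀ i, SinglePeakedD (v i) (p i) k)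
    (hdistinct : Function.Injective p)
    (hcover : (⋃ i, Supp01 (v i)) = Set.Icc (0:ℝ) 1)
    (X : Fin n → Set ℝ) (hX : IsAlloc X)
    (hnw : NonWasteful v X) (hpp : ConnPeakPres p X) :
    ParetoOpt v X :=
  statement2_general v p k hsp X hnw hpp
end

section
/- For every n ≥ 2 there exists a cake-cutting problem with n agents having single-peaked normalized value densities on [0,1] with pairwise disjoint supports, together with (a) an envy-free allocation X in which V_i(X_i) = 1/n for every agent i, and (b) a Pareto optimal allocation X* in which V_i(X*_i) = 1 for every agent i. Consequently the welfare loss (1/n)·Σ_i V_i(X*_i) − (1/n)·Σ_i V_i(X_i) equals (n−1)/n. -/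
/-!
Agent `i` gets a tent density of unit mass supported on the `i`-th of the `n` intervals of
length `1/n`. Cutting every interval into `n` pieces that are equally valuable to its owner
(intermediate value theorem) gives an `n × n` grid whose piece `(i, j)` is worth `1/n` to agent
`i` and nothing to anyone else. Giving agent `j` the `j`-th piece of every interval is therefore
envy-free with value `1/n` for everyone, while giving agent `i` its whole interval yields value
`1`, which no allocation can exceed.
-/

open MeasureTheory

open Set
open scoped Function

lemma monotoneOn_primitive_of_nonneg {f : ℝ → ℝ} {a b : ℝ}
    (hf : IntervalIntegrable f volume a b) (hf0 : ∀ x ∈ Icc a b, 0 ≤ f x) :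
    MonotoneOn (fun t => ∫ x in a..t, f x) (Icc a b) := fun s hs t ht hst => by
  have hint : ∀ u ∈ Icc a b, IntervalIntegrable f volume a u := fun u hu =>
    hf.mono_set (uIcc_subset_uIcc_left (Icc_subset_uIcc hu))
  rw [← sub_nonneg, intervalIntegral.integral_interval_sub_left (hint t ht) (hint s hs)]
  exact intervalIntegral.integral_nonneg hst fun x hx =>
    hf0 x ⟨hs.1.trans hx.1, hx.2.trans ht.2⟩

lemma exists_monotone_cuts_integral_eq {f : ℝ → ℝ} {a b : ℝ} {n : ℕ} (hn : 0 < n)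
    (hab : a ≤ b) (hf : IntervalIntegrable f volume a b) (hf0 : ∀ x ∈ Icc a b, 0 ≤ f x)
    (hf1 : ∫ x in a..b, f x = 1) :
    ∃ τ : ℕ → ℝ, Monotone τ ∧ τ 0 = a ∧ τ n = b ∧
      ∀ j < n, ∫ x in τ j..τ (j + 1), f x = 1 / n := by
  set F : ℝ → ℝ := fun t => ∫ x in a..t, f x
  have hint : ∀ t ∈ Icc a b, IntervalIntegrable f volume a t := fun t ht =>
    hf.mono_set (uIcc_subset_uIcc_left (Icc_subset_uIcc ht))
  have hFm : MonotoneOn F (Icc a b) := monotoneOn_primitive_of_nonneg hf hf0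
  have hFc : ContinuousOn F (Icc a b) := by
    simpa only [uIcc_of_le hab] using
      intervalIntegral.continuousOn_primitive_interval' hf left_mem_uIcc
  have hivt : ∀ j : ℕ, ∃ t ∈ Icc a b, j ≤ n → F t = j / n := by
    intro j
    by_cases hj : j ≤ n
    · obtain ⟨t, ht, hFt⟩ := intermediate_value_Icc hab hFc
        (show (j / n : ℝ) ∈ Icc (F a) (F b) by
          simp only [F, intervalIntegral.integral_same, hf1]
          exact ⟨by positivity, div_le_one_of_le₀ (by exact_mod_cast hj) (by positivity)⟩)
      exact ⟨t, ht, fun _ => hFt⟩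
    · exact ⟨a, left_mem_Icc.2 hab, fun h => absurd h hj⟩
  choose s hs hFs using hivt
  -- `F` may be flat near `a` or `b`, so `s 0` and `s n` need not be the endpoints: pin them.
  set τ : ℕ → ℝ := fun j => if j = 0 then a else if j < n then s j else b
  have hτ_mem : ∀ j, τ j ∈ Icc a b := fun j => by
    simp only [τ]; split_ifs
    exacts [left_mem_Icc.2 hab, hs j, right_mem_Icc.2 hab]
  have hFτ : ∀ j ≤ n, F (τ j) = j / n := fun j hj => by
    simp only [τ]; split_ifs with h0 h
    · simp [F, h0]
    · exact hFs j hj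
    · simp [F, hf1, le_antisymm hj (not_lt.1 h), hn.ne']
  refine ⟨τ, monotone_nat_of_le_succ fun j => ?_, if_pos rfl, by simp [τ, hn.ne'],
    fun j hj => ?_⟩
  · by_cases hj : j + 1 ≤ n
    · by_contra hlt
      have := hFm (hτ_mem _) (hτ_mem _) (not_le.1 hlt).le
      rw [hFτ j (by omega), hFτ (j + 1) hj, div_le_div_iff_of_pos_right (by positivity)] at this
      push_cast at this
      linarith
    · simp only [τ, if_neg (show ¬ j + 1 < n by omega), if_neg (Nat.succ_ne_zero j)]
      exact (hτ_mem j).2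
  · rw [← intervalIntegral.integral_interval_sub_left (hint _ (hτ_mem _)) (hint _ (hτ_mem _))]
    change F (τ (j + 1)) - F (τ j) = _
    rw [hFτ _ hj, hFτ _ hj.le]
    push_cast
    ring

/-- Cell `0` is closed, so that the cells of a sequence starting at `0` also cover `0`. -/
def cell (c : ℕ → ℝ) (k : ℕ) : Set ℝ :=
  if k = 0 then Icc (c 0) (c 1) else Ioc (c k) (c (k + 1))

lemma measurableSet_cell (c : ℕ → ℝ) (k : ℕ) : MeasurableSet (cell c k) := by
  unfold cell; split_ifs
  exacts [measurableSet_Icc, measurableSet_Ioc]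

lemma cell_subset_Icc (c : ℕ → ℝ) (k : ℕ) : cell c k ⊆ Icc (c k) (c (k + 1)) := by
  unfold cell; split_ifs with h
  · subst h; exact Subset.rfl
  · exact Ioc_subset_Icc_self

lemma Monotone.pairwise_disjoint_on_cell {c : ℕ → ℝ} (hc : Monotone c) :
    Pairwise (Disjoint on cell c) := by
  suffices h : ∀ k l, k < l → Disjoint (cell c k) (cell c l) from
    fun k l hkl => hkl.lt_or_gt.elim (h k l) fun hlk => (h l k hlk).symm
  intro k l hkl
  rw [show cell c l = Ioc (c l) (c (l + 1)) from if_neg (by omega)]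
  exact Set.disjoint_left.2 fun x hxk hxl =>
    (hxl.1.trans_le' (hc hkl)).not_ge (cell_subset_Icc c k hxk).2

lemma Monotone.iUnion_cell {c : ℕ → ℝ} (hc : Monotone c) {N : ℕ} (hN : 0 < N) :
    ⋃ k : Fin N, cell c k = Icc (c 0) (c N) := by
  refine Subset.antisymm (iUnion_subset fun k x hx => ?_) fun x hx => ?_
  · have hx := cell_subset_Icc c k hx
    exact ⟨(hc (Nat.zero_le _)).trans hx.1, hx.2.trans (hc k.2)⟩
  · have hxN : x ≤ c (N - 1 + 1) := by rw [Nat.sub_one_add_one hN.ne']; exact hx.2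
    have hex : ∃ k, x ≤ c (k + 1) := ⟨N - 1, hxN⟩
    refine mem_iUnion.2 ⟨⟨Nat.find hex, by have := Nat.find_min' hex hxN; omega⟩, ?_⟩
    by_cases h0 : Nat.find hex = 0
    · simp only [cell, h0, if_true]
      exact ⟨hx.1, by simpa [h0] using Nat.find_spec hex⟩
    · simp only [cell, h0, if_false]
      refine ⟨not_le.1 fun h => Nat.find_min hex (Nat.sub_one_lt h0) ?_, Nat.find_spec hex⟩
      rwa [Nat.sub_one_add_one h0]

lemma setIntegral_cell (v : ℝ → ℝ) {c : ℕ → ℝ} {k : ℕ} (hk : c k ≤ c (k + 1)) :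
    ∫ x in cell c k, v x = ∫ x in c k..c (k + 1), v x := by
  rw [intervalIntegral.integral_of_le hk]
  unfold cell; split_ifs with h
  · subst h; exact integral_Icc_eq_integral_Ioc
  · rfl

lemma isAlloc_biUnion_fiber {ι : Type*} [Fintype ι] {n : ℕ} {P : ι → Set ℝ}
    (hmeas : ∀ k, MeasurableSet (P k)) (hdisj : Pairwise (Disjoint on P))
    (hcover : ⋃ k, P k = Icc 0 1) (ℓ : ι → Fin n) :
    IsAlloc fun a => ⋃ k ∈ ({k | ℓ k = a} : Finset ι), P k := by
  refine ⟨fun a => Finset.measurableSet_biUnion _ fun k _ => hmeas k, fun a b hab => ?_, ?_⟩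
  · rw [← Set.disjoint_iff_inter_eq_empty]
    simp only [Set.disjoint_iUnion_left, Set.disjoint_iUnion_right, Finset.mem_filter,
      Finset.mem_univ, true_and]
    rintro k rfl l rfl
    exact hdisj fun h => hab (h ▸ rfl)
  · rw [← hcover]
    ext x
    simp

lemma pieceVal_biUnion {ι : Type*} {P : ι → Set ℝ} {v : ℝ → ℝ} (s : Finset ι)
    (hmeas : ∀ k, MeasurableSet (P k)) (hdisj : Pairwise (Disjoint on P))
    (hv : ∀ k, IntegrableOn v (P k)) :
    pieceVal v (⋃ k ∈ s, P k) = ∑ k ∈ s, pieceVal v (P k) :=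
  integral_biUnion_finset s (fun k _ => hmeas k) (hdisj.set_pairwise _) fun k _ => hv k

lemma pieceVal_biUnion_snd {n : ℕ} {P : Fin n × Fin n → Set ℝ} {v : ℝ → ℝ} {a : Fin n}
    (hmeas : ∀ p, MeasurableSet (P p)) (hdisj : Pairwise (Disjoint on P))
    (hv : ∀ p, IntegrableOn v (P p))
    (hval : ∀ p, pieceVal v (P p) = if a = p.1 then (1 / n : ℝ) else 0) (b : Fin n) :
    pieceVal v (⋃ p ∈ ({p | p.2 = b} : Finset _), P p) = 1 / n := by
  rw [pieceVal_biUnion _ hmeas hdisj hv]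
  simp [hval, Finset.sum_filter, Fintype.sum_prod_type]

lemma pieceVal_biUnion_fst {n : ℕ} {P : Fin n × Fin n → Set ℝ} {v : ℝ → ℝ} {a : Fin n}
    (hmeas : ∀ p, MeasurableSet (P p)) (hdisj : Pairwise (Disjoint on P))
    (hv : ∀ p, IntegrableOn v (P p))
    (hval : ∀ p, pieceVal v (P p) = if a = p.1 then (1 / n : ℝ) else 0) :
    pieceVal v (⋃ p ∈ ({p | p.1 = a} : Finset _), P p) = 1 := by
  rw [pieceVal_biUnion _ hmeas hdisj hv]
  simp [hval, Finset.sum_filter, Fintype.sum_prod_type, (Nat.cast_pos.2 a.pos).ne']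

lemma IsAlloc.integral_eq_sum {n : ℕ} {X : Fin n → Set ℝ} (hX : IsAlloc X) {v : ℝ → ℝ}
    (hv : IntegrableOn v (Icc 0 1)) : ∫ x in Icc 0 1, v x = ∑ i, pieceVal v (X i) := by
  obtain ⟨hmeas, hdisj, hcover⟩ := hX
  rw [← hcover]
  exact integral_iUnion_fintype hmeas
    (fun i j hij => Set.disjoint_iff_inter_eq_empty.2 (hdisj i j hij))
    fun i => hv.mono_set (hcover ▸ subset_iUnion X i)

lemma paretoOpt_of_pieceVal_eq_one {n : ℕ} {v : Fin n → ℝ → ℝ} {X : Fin n → Set ℝ}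
    (hv0 : ∀ i, ∀ x ∈ Icc (0 : ℝ) 1, 0 ≤ v i x) (hv1 : ∀ i, ∫ x in Icc 0 1, v i x = 1)
    (hX : ∀ i, pieceVal (v i) (X i) = 1) : ParetoOpt v X := by
  rintro ⟨Y, hY, -, i, hi⟩
  have hle : pieceVal (v i) (Y i) ≤ 1 := by
    rw [← hv1 i]
    refine setIntegral_mono_set (Integrable.of_integral_ne_zero (by simp [hv1 i]))
      ((ae_restrict_iff' measurableSet_Icc).2 (Filter.Eventually.of_forall (hv0 i)))
      (LE.le.eventuallyLE ?_)
    exact hY.2.2 ▸ subset_iUnion Y i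
  linarith [hX i]

noncomputable def tent (n : ℕ) (x : ℝ) : ℝ := max 0 (2 * n - 4 * n ^ 2 * |x - 1 / (2 * n)|)

lemma continuous_tent (n : ℕ) : Continuous (tent n) := by
  unfold tent; fun_prop

lemma tent_nonneg (n : ℕ) (x : ℝ) : 0 ≤ tent n x := le_max_left _ _

lemma tent_eq_zero {n : ℕ} {x : ℝ} (hx : x ∉ Ioo (0 : ℝ) (1 / n)) : tent n x = 0 := by
  rcases n.eq_zero_or_pos with rfl | hn
  · simp [tent]
  have hN : (0 : ℝ) < n := by exact_mod_cast hn
  have hfar : 1 / (2 * n) ≤ |x - 1 / (2 * n)| := by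
    rw [mem_Ioo, not_and_or, not_lt, not_lt] at hx
    rcases hx with hx | hx
    · rw [abs_sub_comm]
      refine le_trans ?_ (le_abs_self _)
      linarith [show (0 : ℝ) < 1 / (2 * n) by positivity]
    · refine le_trans ?_ (le_abs_self _)
      have : 1 / (n : ℝ) = 2 * (1 / (2 * n)) := by field_simp
      linarith
  refine max_eq_left ?_
  have := mul_le_mul_of_nonneg_left hfar (by positivity : (0 : ℝ) ≤ 4 * n ^ 2)
  have h2n : 4 * (n : ℝ) ^ 2 * (1 / (2 * n)) = 2 * n := by field_simp; ring
  linarith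

lemma integral_tent {n : ℕ} (hn : 0 < n) : ∫ x in (0 : ℝ)..1 / n, tent n x = 1 := by
  have hN : (0 : ℝ) < n := by exact_mod_cast hn
  set h : ℝ := 1 / (2 * n) with hh
  set g : ℝ → ℝ := fun y => 2 * n - 4 * n ^ 2 * y
  have h0 : 0 ≤ h := by positivity
  have hpeak : 4 * (n : ℝ) ^ 2 * h = 2 * n := by rw [hh]; field_simp; ring
  have hi : ∀ a b, IntervalIntegrable (tent n) volume a b :=
    fun a b => (continuous_tent n).intervalIntegrable a b
  have hleft : ∫ x in (0 : ℝ)..h, tent n x = ∫ x in (0 : ℝ)..h, g (h - x) := by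
    refine intervalIntegral.integral_congr fun x hx => ?_
    rw [uIcc_of_le h0] at hx
    simp only [tent, g, ← hh]
    rw [abs_of_nonpos (by linarith [hx.2]),
      max_eq_right (by nlinarith [mul_nonneg (sq_nonneg (n : ℝ)) hx.1])]
    ring
  have hright : ∫ x in h..h + h, tent n x = ∫ x in h..h + h, g (x - h) := by
    refine intervalIntegral.integral_congr fun x hx => ?_
    rw [uIcc_of_le (by linarith)] at hx
    simp only [tent, g, ← hh]
    rw [abs_of_nonneg (by linarith [hx.1]),
      max_eq_right (by nlinarith [mul_nonneg (sq_nonneg (n : ℝ)) (sub_nonneg.2 hx.2)])]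
  have hg : ∫ y in (0 : ℝ)..h, g y = 1 / 2 := by
    simp only [g]
    rw [intervalIntegral.integral_sub intervalIntegrable_const
        (intervalIntegral.intervalIntegrable_id.const_mul _),
      intervalIntegral.integral_const, intervalIntegral.integral_const_mul, integral_id,
      smul_eq_mul, sub_zero, hh]
    field_simp
    ring
  rw [show 1 / (n : ℝ) = h + h by rw [hh]; field_simp; ring,
    ← intervalIntegral.integral_add_adjacent_intervals (hi 0 h) (hi h (h + h)), hleft, hright,
    intervalIntegral.integral_comp_sub_left, intervalIntegral.integral_comp_sub_right]
  simp only [sub_self, sub_zero, add_sub_cancel_right, hg]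
  norm_num

noncomputable def gridCut (n : ℕ) (τ : ℕ → ℝ) (k : ℕ) : ℝ :=
  ((k / n : ℕ) : ℝ) / n + τ (k % n)

def gridCell (n : ℕ) (τ : ℕ → ℝ) (p : Fin n × Fin n) : Set ℝ :=
  cell (gridCut n τ) (finProdFinEquiv p)

section Grid

variable {n : ℕ} {τ : ℕ → ℝ}

lemma gridCut_add_mul (hn : 0 < n) (hτ0 : τ 0 = 0) (hτn : τ n = 1 / n) {j : ℕ} (hj : j ≤ n)
    (i : ℕ) : gridCut n τ (j + n * i) = i / n + τ j := by
  rcases hj.lt_or_eq with hj | rfl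
  · simp [gridCut, Nat.add_mul_div_left _ _ hn, Nat.div_eq_of_lt hj, Nat.mod_eq_of_lt hj]
  · rw [show j + j * i = 0 + j * (i + 1) by ring]
    simp [gridCut, Nat.mul_div_cancel_left _ hn, hτ0, hτn, add_div]

lemma monotone_gridCut (hn : 0 < n) (hτ0 : τ 0 = 0) (hτn : τ n = 1 / n) (hτ : Monotone τ) :
    Monotone (gridCut n τ) := by
  refine monotone_nat_of_le_succ fun k => ?_
  have hk : k = k % n + n * (k / n) := (Nat.mod_add_div k n).symm
  rw [hk, add_right_comm, gridCut_add_mul hn hτ0 hτn (Nat.mod_lt k hn).le,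
    gridCut_add_mul hn hτ0 hτn (Nat.mod_lt k hn)]
  gcongr
  exact hτ (Nat.le_succ _)

lemma pairwise_disjoint_gridCell (hn : 0 < n) (hτ0 : τ 0 = 0) (hτn : τ n = 1 / n)
    (hτ : Monotone τ) : Pairwise (Disjoint on gridCell n τ) :=
  (monotone_gridCut hn hτ0 hτn hτ).pairwise_disjoint_on_cell.comp_of_injective
    (Fin.val_injective.comp finProdFinEquiv.injective)

lemma iUnion_gridCell (hn : 0 < n) (hτ0 : τ 0 = 0) (hτn : τ n = 1 / n) (hτ : Monotone τ) :
    ⋃ p, gridCell n τ p = Icc 0 1 := by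
  unfold gridCell
  rw [finProdFinEquiv.surjective.iUnion_comp (fun k => cell (gridCut n τ) k),
    (monotone_gridCut hn hτ0 hτn hτ).iUnion_cell (Nat.mul_pos hn hn)]
  congr 1
  · simp [gridCut, hτ0]
  · simpa [hτ0, (Nat.cast_pos.2 hn).ne'] using gridCut_add_mul hn hτ0 hτn (Nat.zero_le n) n

lemma pieceVal_gridCell (hn : 0 < n) (hτ0 : τ 0 = 0) (hτn : τ n = 1 / n)
    (hτ : Monotone τ) {f : ℝ → ℝ} (hf : ∀ x ∉ Ioo (0 : ℝ) (1 / n), f x = 0)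
    (hτf : ∀ j < n, ∫ x in τ j..τ (j + 1), f x = 1 / n) (a : Fin n) (p : Fin n × Fin n) :
    pieceVal (fun x => f (x - a / n)) (gridCell n τ p) = if a = p.1 then (1 / n : ℝ) else 0 := by
  obtain ⟨i, j⟩ := p
  rw [pieceVal, gridCell, setIntegral_cell _ (monotone_gridCut hn hτ0 hτn hτ (Nat.le_succ _)),
    finProdFinEquiv_apply_val, add_right_comm, gridCut_add_mul hn hτ0 hτn j.2.le,
    gridCut_add_mul hn hτ0 hτn j.2]
  split_ifs with h
  · subst h
    simp [intervalIntegral.integral_comp_sub_right, hτf j j.2]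
  · refine (intervalIntegral.integral_congr fun x hx => hf _ ?_).trans
      intervalIntegral.integral_zero
    rw [uIcc_of_le (by gcongr; exact hτ (Nat.le_succ _))] at hx
    have hlo : (i : ℝ) / n ≤ x := by linarith [hx.1, hτ0 ▸ hτ (Nat.zero_le j)]
    have hhi : x ≤ (i + 1 : ℝ) / n := by
      rw [add_div]; linarith [hx.2, hτn ▸ hτ (show j + 1 ≤ n from j.2)]
    rintro ⟨hpos, hlt⟩
    rcases (Fin.val_injective.ne h).lt_or_gt with hai | hia
    · have : ((a : ℕ) + 1 : ℝ) / n ≤ i / n := by gcongr; exact_mod_cast hai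
      rw [add_div] at this
      linarith
    · have : ((i : ℕ) + 1 : ℝ) / n ≤ a / n := by gcongr; exact_mod_cast hia
      linarith

end Grid

lemma exists_tent_grid {n : ℕ} (hn : 0 < n) :
    ∃ P : Fin n × Fin n → Set ℝ, (∀ p, MeasurableSet (P p)) ∧
      Pairwise (Disjoint on P) ∧ ⋃ p, P p = Icc 0 1 ∧
      ∀ (a : Fin n) p, pieceVal (fun x => tent n (x - a / n)) (P p) =
        if a = p.1 then (1 / n : ℝ) else 0 := by
  obtain ⟨τ, hτ, hτ0, hτn, hτf⟩ := exists_monotone_cuts_integral_eq hn (by positivity)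
    ((continuous_tent n).intervalIntegrable _ _) (fun x _ => tent_nonneg n x) (integral_tent hn)
  exact ⟨gridCell n τ, fun p => measurableSet_cell _ _,
    pairwise_disjoint_gridCell hn hτ0 hτn hτ, iUnion_gridCell hn hτ0 hτn hτ,
    pieceVal_gridCell hn hτ0 hτn hτ (fun x hx => tent_eq_zero hx) hτf⟩

lemma pairwise_disjoint_Ioo_div (n : ℕ) :
    Pairwise (Disjoint on fun k : ℕ => Ioo ((k : ℝ) / n) ((k + 1) / n)) := by
  have hmono : Monotone fun k : ℕ => (k : ℝ) / n :=
    fun a b h => div_le_div_of_nonneg_right (Nat.cast_le.2 h) n.cast_nonneg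
  simpa using hmono.pairwise_disjoint_on_Ioo_succ

lemma supp01_tent_sub_subset (n : ℕ) (a : ℝ) :
    Supp01 (fun x => tent n (x - a / n)) ⊆ Ioo (a / n) ((a + 1) / n) := fun x hx => by
  by_contra h
  refine (tent_eq_zero fun hmem => h ?_).not_gt hx.2
  rw [add_div]
  exact ⟨by linarith [hmem.1], by linarith [hmem.2]⟩

lemma singlePeakedD_tent_sub {n a : ℕ} (hn : 0 < n) (ha : a < n)
    (hnorm : ∫ x in Icc 0 1, tent n (x - a / n) = 1) :
    SinglePeakedD (fun x => tent n (x - a / n)) (a / n + 1 / (2 * n)) (4 * n ^ 2) := by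
  have hN : (0 : ℝ) < n := by exact_mod_cast hn
  refine ⟨by positivity, ⟨by positivity, ?_⟩, fun x _ => ?_, hnorm⟩
  · have h1 : ((a : ℝ) + 1) / n ≤ 1 := (div_le_one hN).2 (by exact_mod_cast ha)
    have h2 : 1 / (2 * (n : ℝ)) ≤ 1 / n := by gcongr; linarith
    rw [add_div] at h1
    linarith
  · have hpeak : tent n (1 / (2 * n)) = 2 * n := by simp [tent]
    simp only [add_sub_cancel_left, hpeak]
    simp only [tent, sub_sub]

/-- For every n ≥ 2 there is a cake-cutting problem with single-peaked normalized
densities having pairwise disjoint supports, an envy-free allocation giving every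
agent exactly 1/n, and a Pareto optimal allocation giving every agent 1; the
welfare loss between them is exactly (n-1)/n. -/
theorem statement7 (n : ℕ) (hn : 2 ≤ n) :
    ∃ (v : Fin n → ℝ → ℝ) (p : Fin n → ℝ) (k : Fin n → ℝ),
      (∀ i, SinglePeakedD (v i) (p i) (k i)) ∧
      (∀ i j, i ≠ j → Supp01 (v i) ∩ Supp01 (v j) = ∅) ∧
      ∃ X Xstar : Fin n → Set ℝ,
        IsAlloc X ∧ EnvyFreeA v X ∧ (∀ i, pieceVal (v i) (X i) = 1/n) ∧
        IsAlloc Xstar ∧ ParetoOpt v Xstar ∧ (∀ i, pieceVal (v i) (Xstar i) = 1) ∧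
        (1/n) * (∑ i, pieceVal (v i) (Xstar i)) - (1/n) * (∑ i, pieceVal (v i) (X i))
          = (n - 1)/n := by
  have hn0 : 0 < n := by omega
  have hn' : (n : ℝ) ≠ 0 := by positivity
  obtain ⟨P, hmeas, hdisj, hcover, hval⟩ := exists_tent_grid hn0
  set v : Fin n → ℝ → ℝ := fun a x => tent n (x - a / n)
  replace hval : ∀ a p, pieceVal (v a) (P p) = if a = p.1 then (1 / n : ℝ) else 0 := hval
  have hv : ∀ a, IntegrableOn (v a) (Icc 0 1) := fun a =>
    ((continuous_tent n).comp (by fun_prop)).integrableOn_Icc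
  have hint : ∀ a p, IntegrableOn (v a) (P p) := fun a p =>
    (hv a).mono_set (hcover ▸ subset_iUnion _ p)
  have hX := isAlloc_biUnion_fiber hmeas hdisj hcover Prod.snd
  have hXval a b := pieceVal_biUnion_snd hmeas hdisj (hint a) (hval a) b
  have hXstarval a := pieceVal_biUnion_fst hmeas hdisj (hint a) (hval a)
  have hnorm : ∀ a, ∫ x in Icc 0 1, v a x = 1 := fun a => by
    rw [hX.integral_eq_sum (hv a)]
    simp only [hXval]
    simp [hn']
  refine ⟨v, fun a => a / n + 1 / (2 * n), fun _ => 4 * n ^ 2,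
    fun a => singlePeakedD_tent_sub hn0 a.2 (hnorm a), fun a b hab => ?_, _, _, hX,
    fun a b => ((hXval a b).trans (hXval a a).symm).le, fun a => hXval a a,
    isAlloc_biUnion_fiber hmeas hdisj hcover Prod.fst,
    paretoOpt_of_pieceVal_eq_one (fun a x _ => tent_nonneg n _) hnorm hXstarval, hXstarval, ?_⟩
  · exact Set.disjoint_iff_inter_eq_empty.1 ((pairwise_disjoint_Ioo_div n
      (Fin.val_injective.ne hab)).mono (supp01_tent_sub_subset n a) (supp01_tent_sub_subset n b))
  · simp only [hXval, hXstarval, Finset.sum_const, Finset.card_univ, Fintype.card_fin,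
      nsmul_eq_mul]
    field_simp
end
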